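/- Let f : ℝ → ℝ be differentiable with f(x) ≠ 0 for all x, and suppose the logarithmic derivative f′/f is an odd function, i.e. f′(−x)/f(−x) = −f′(x)/f(x) for all x ∈ ℝ. Then f is either even or odd: either f(−x) = f(x) for all x ∈ ℝ, or f(−x) = −f(x) for all x ∈ ℝ. -/
import Mathlib

/-- If `f : ℝ → ℝ` is differentiable and nowhere vanishing and its logarithmic
derivative `f′/f` is odd, then `f` is either even or odd. -/
theorem even_or_odd_of_logDeriv_odd (f : ℝ → ℝ) (hf : Differentiable ℝ f)
    (hne : ∀ x : ℝ, f x ≠ 0)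
    (hodd : ∀ x : ℝ, deriv f (-x) / f (-x) = -(deriv f x / f x)) :
    (∀ x : ℝ, f (-x) = f x) ∨ (∀ x : ℝ, f (-x) = -f x) := by
  left
  set g : ℝ → ℝ := fun x => f (-x) / f x with hg
  have key : ∀ x : ℝ, HasDerivAt g 0 x := by
    intro x
    have h1 : HasDerivAt (fun x : ℝ => f (-x)) (deriv f (-x) * (-1)) x :=
      ((hf (-x)).hasDerivAt).comp x (hasDerivAt_neg x)
    have h2 := h1.div (hf x).hasDerivAt (hne x)
    have hodd' : deriv f (-x) * f x = -(deriv f x * f (-x)) := by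
      have h := hodd x
      have hna := hne (-x)
      have hnx := hne x
      field_simp at h
      linarith [h]
    have : (deriv f (-x) * -1 * f x - f (-x) * deriv f x) / f x ^ 2 = 0 := by
      rw [div_eq_zero_iff]
      left; nlinarith [hodd']
    rwa [this] at h2
  have hgd : Differentiable ℝ g := fun x => (key x).differentiableAt
  have hconst : ∀ x : ℝ, g x = g 0 :=
    fun x => is_const_of_deriv_eq_zero hgd (fun x => (key x).deriv) x 0
  intro x
  have h0 : g 0 = 1 := by simp [hg, div_self (hne 0)]
  have := hconst x
  rw [h0] at this
  have := (div_eq_one_iff_eq (hne x)).mp this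
  exact this
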